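/- arXiv:2302.13529 — 8 statements merged into one kernel-verified Lean document; each statement's English description precedes it below -/
import Mathlib

section
/- The expected spread function is not supermodular in the blocker set: there exists a directed graph G with edge probabilities, a seed set S, sets X ⊆ Y of non-seed vertices, and a vertex x ∉ Y ∪ S, such that E(S, G[V\(X∪{x})]) − E(S, G[V\X]) > E(S, G[V\(Y∪{x})]) − E(S, G[V\Y]), violating the supermodularity inequality f(X∪{x}) − f(X) ≤ f(Y∪{x}) − f(Y) for f(B) = E(S, G[V\B]). -/
/-!
Independent cascade model via random sampled (live-edge) graphs.
-/

open Finset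

noncomputable section
open scoped Classical

variable {V : Type*}

/-- Probability weight of a sampled graph `ω`. -/
def sampleWeight [Fintype V] (p : V → V → ℝ) (ω : V → V → Bool) : ℝ :=
  ∏ u : V, ∏ v : V, if ω u v then p u v else 1 - p u v

/-- Reachability from `s` to `w` in the sampled graph `ω`, through vertices
outside the blocker set `B`. -/
def ReachB (ω : V → V → Bool) (B : Finset V) (s w : V) : Prop :=
  Relation.ReflTransGen (fun a b => ω a b = true ∧ a ∉ B ∧ b ∉ B) s w

/-- Number of vertices reachable from the seed set `S` in the sampled graph `ω`
restricted to `V \ B`. -/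
def sigmaB [Fintype V] (ω : V → V → Bool) (B S : Finset V) : ℕ :=
  (Finset.univ.filter fun w => ∃ s ∈ S, ReachB ω B s w).card

/-- Expected spread of seed set `S` when the blocker set `B` is removed. -/
def spread [Fintype V] (p : V → V → ℝ) (S B : Finset V) : ℝ :=
  ∑ ω : V → V → Bool, sampleWeight p ω * (sigmaB ω B S : ℝ)

/-! ### Counterexample construction -/

/-- Helper: compute the cardinality of a filter regardless of the decidability
instance (the instance is a strict-implicit so it unifies with the goal). -/
lemma card_filter_eq_of_iff {α : Type*} [Fintype α] [DecidableEq α] (P : α → Prop)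
    {inst : DecidablePred P} (t : Finset α) (h : ∀ a, P a ↔ a ∈ t) :
    (@Finset.filter α P inst Finset.univ).card = t.card := by
  congr 1
  ext a
  simp [Finset.mem_filter, h a]

/-- The live-edge graph: edges 0→1, 0→2, 1→3, 2→3 on `Fin 4`. -/
def w0 : Fin 4 → Fin 4 → Bool := fun u v =>
  decide ((u = 0 ∧ v = 1) ∨ (u = 0 ∧ v = 2) ∨ (u = 1 ∧ v = 3) ∨ (u = 2 ∧ v = 3))

/-- Deterministic edge probabilities matching `w0`. -/
def p0 : Fin 4 → Fin 4 → ℝ := fun u v => if w0 u v then 1 else 0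

lemma sampleWeight_w0 : sampleWeight p0 w0 = 1 := by
  unfold sampleWeight
  refine Finset.prod_eq_one fun u _ => Finset.prod_eq_one fun v _ => ?_
  unfold p0
  cases h : w0 u v <;> simp [h]

lemma sampleWeight_ne (ω : Fin 4 → Fin 4 → Bool) (h : ω ≠ w0) :
    sampleWeight p0 ω = 0 := by
  have : ∃ u v, ω u v ≠ w0 u v := by
    by_contra hc
    push_neg at hc
    exact h (funext fun u => funext fun v => hc u v)
  obtain ⟨u, v, huv⟩ := this
  unfold sampleWeight
  refine Finset.prod_eq_zero (Finset.mem_univ u) ?_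
  refine Finset.prod_eq_zero (Finset.mem_univ v) ?_
  unfold p0
  cases h1 : ω u v <;> cases h2 : w0 u v <;> simp_all

lemma spread_eq_det [Fintype V] (p : V → V → ℝ) (ω₀ : V → V → Bool)
    (h1 : sampleWeight p ω₀ = 1) (h0 : ∀ ω, ω ≠ ω₀ → sampleWeight p ω = 0)
    (S B : Finset V) : spread p S B = (sigmaB ω₀ B S : ℝ) := by
  unfold spread
  rw [Finset.sum_eq_single ω₀ (fun ω _ hne => by rw [h0 ω hne, zero_mul])
    (fun habs => absurd (Finset.mem_univ ω₀) habs), h1, one_mul]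

lemma spread_eq (B : Finset (Fin 4)) :
    spread p0 {0} B = (sigmaB w0 B ({0} : Finset (Fin 4)) : ℝ) :=
  spread_eq_det p0 w0 sampleWeight_w0 sampleWeight_ne _ B

lemma reach_self (B : Finset (Fin 4)) (s : Fin 4) : ReachB w0 B s s :=
  Relation.ReflTransGen.refl

lemma reach_step {B : Finset (Fin 4)} {a b : Fin 4} (h : w0 a b = true)
    (ha : a ∉ B) (hb : b ∉ B) : ReachB w0 B a b :=
  Relation.ReflTransGen.single ⟨h, ha, hb⟩

/-- Reaching a vertex other than the start means that vertex is not blocked. -/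
lemma reach_not_blocked {B : Finset (Fin 4)} {s w : Fin 4}
    (h : ReachB w0 B s w) (hw : w ≠ s) : w ∉ B := by
  unfold ReachB at h
  rcases (Relation.ReflTransGen.cases_tail h) with rfl | ⟨c, _, hc⟩
  · exact absurd rfl hw
  · exact hc.2.2

lemma not_reach_blocked12 {w : Fin 4} (h : ReachB w0 ({1, 2} : Finset (Fin 4)) 0 w) :
    w = 0 := by
  unfold ReachB at h
  induction h with
  | refl => rfl
  | @tail b c hb hstep ih =>
    subst ih
    fin_cases c <;> revert hstep <;> decide

/-- the expected spread function `f B = E(S, G[V \ B])` is not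
supermodular in the blocker set: there is an instance where the supermodularity
inequality `f(X ∪ {x}) - f(X) ≤ f(Y ∪ {x}) - f(Y)` fails. -/
theorem spread_not_supermodular :
    ∃ (n : ℕ) (p : Fin n → Fin n → ℝ) (S X Y : Finset (Fin n)) (x : Fin n),
      (∀ u v, 0 ≤ p u v ∧ p u v ≤ 1) ∧
      X ⊆ Y ∧ Disjoint Y S ∧ x ∉ Y ∧ x ∉ S ∧
      spread p S (X ∪ {x}) - spread p S X >
        spread p S (Y ∪ {x}) - spread p S Y := by
  refine ⟨4, p0, {0}, ∅, {2}, 1, ?_, ?_, ?_, ?_, ?_, ?_⟩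
  · intro u v; unfold p0; split <;> norm_num
  · exact Finset.empty_subset _
  · decide
  · decide
  · decide
  · -- f(∅)=4, f({1})=3, f({2})=3, f({1,2})=1
    have h0 : sigmaB w0 (∅ : Finset (Fin 4)) ({0} : Finset (Fin 4)) = 4 := by
      unfold sigmaB
      rw [card_filter_eq_of_iff _ (Finset.univ : Finset (Fin 4)) ?_]
      · decide
      · intro w
        simp only [Finset.mem_singleton, exists_eq_left, Finset.mem_univ, iff_true]
        fin_cases w
        · exact reach_self _ _
        · exact reach_step (by decide) (by decide) (by decide)
        · exact reach_step (by decide) (by decide) (by decide)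
        · exact (reach_step (B := ∅) (a := 0) (b := 1) (by decide) (by decide)
            (by decide)).trans (reach_step (by decide) (by decide) (by decide))
    have h1 : sigmaB w0 ({1} : Finset (Fin 4)) ({0} : Finset (Fin 4)) = 3 := by
      unfold sigmaB
      rw [card_filter_eq_of_iff _ ({0, 2, 3} : Finset (Fin 4)) ?_]
      · decide
      · intro w
        simp only [Finset.mem_singleton, exists_eq_left, Finset.mem_insert]
        constructor
        · intro h
          fin_cases w
          · exact Or.inl rfl
          · exact absurd (by decide) (reach_not_blocked h (by decide))
          · exact Or.inr (Or.inl rfl)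
          · exact Or.inr (Or.inr rfl)
        · rintro (rfl | rfl | rfl)
          · exact reach_self _ _
          · exact reach_step (by decide) (by decide) (by decide)
          · exact (reach_step (B := {1}) (a := 0) (b := 2) (by decide) (by decide)
              (by decide)).trans (reach_step (by decide) (by decide) (by decide))
    have h2 : sigmaB w0 ({2} : Finset (Fin 4)) ({0} : Finset (Fin 4)) = 3 := by
      unfold sigmaB
      rw [card_filter_eq_of_iff _ ({0, 1, 3} : Finset (Fin 4)) ?_]
      · decide
      · intro w
        simp only [Finset.mem_singleton, exists_eq_left, Finset.mem_insert]
        constructor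
        · intro h
          fin_cases w
          · exact Or.inl rfl
          · exact Or.inr (Or.inl rfl)
          · exact absurd (by decide) (reach_not_blocked h (by decide))
          · exact Or.inr (Or.inr rfl)
        · rintro (rfl | rfl | rfl)
          · exact reach_self _ _
          · exact reach_step (by decide) (by decide) (by decide)
          · exact (reach_step (B := {2}) (a := 0) (b := 1) (by decide) (by decide)
              (by decide)).trans (reach_step (by decide) (by decide) (by decide))
    have h12 : sigmaB w0 ({1, 2} : Finset (Fin 4)) ({0} : Finset (Fin 4)) = 1 := by
      unfold sigmaB
      rw [card_filter_eq_of_iff _ ({0} : Finset (Fin 4)) ?_]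
      · decide
      · intro w
        simp only [Finset.mem_singleton, exists_eq_left]
        exact ⟨not_reach_blocked12, fun h => h ▸ reach_self _ _⟩
    have e1 : ((∅ : Finset (Fin 4)) ∪ {1}) = ({1} : Finset (Fin 4)) := by decide
    have e2 : (({2} : Finset (Fin 4)) ∪ {1}) = ({1, 2} : Finset (Fin 4)) := by decide
    rw [e1, e2, spread_eq, spread_eq, spread_eq, spread_eq, h0, h1, h2, h12]
    norm_num
end
end

section
/- For a random sampled graph g derived from G (each edge (u,v) kept independently with probability p(u,v)), the expected number of vertices reachable from a seed vertex s in g equals the expected spread E({s}, G) under the independent cascade model. -/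
/-!
Independent cascade model via random sampled (live-edge) graphs.
-/

open Finset

noncomputable section
open scoped Classical

variable {V : Type*}

/-- One step of the independent-cascade diffusion in the sampled graph `ω`:
every out-neighbor (along a live edge) of an active vertex becomes active. -/
def icStep [Fintype V] (ω : V → V → Bool) (A : Finset V) : Finset V :=
  A ∪ Finset.univ.filter (fun v => ∃ u ∈ A, ω u v = true)

/-- The set of vertices eventually activated from the seed set `S` in the
sampled graph `ω` (after `|V|` diffusion steps the process is stable). -/
def icActivated [Fintype V] (ω : V → V → Bool) (S : Finset V) : Finset V :=
  (icStep ω)^[Fintype.card V] S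

/-- Expected spread of the independent cascade process from seed `s`:
expected number of eventually activated vertices. -/
def icSpread [Fintype V] (p : V → V → ℝ) (s : V) : ℝ :=
  ∑ ω : V → V → Bool, sampleWeight p ω * ((icActivated ω {s}).card : ℝ)

lemma subset_icStep [Fintype V] (ω : V → V → Bool) (A : Finset V) :
    A ⊆ icStep ω A := Finset.subset_union_left

lemma icStep_iterate_fixed [Fintype V] (ω : V → V → Bool) (A : Finset V)
    (h : icStep ω A = A) (n : ℕ) : (icStep ω)^[n] A = A := by
  induction n with
  | zero => rfl
  | succ n ih => rw [Function.iterate_succ_apply', ih, h]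

lemma icStep_card_ge [Fintype V] (ω : V → V → Bool) (S : Finset V) (k : ℕ)
    (h : ∀ j < k, icStep ω ((icStep ω)^[j] S) ≠ (icStep ω)^[j] S) :
    S.card + k ≤ ((icStep ω)^[k] S).card := by
  induction k with
  | zero => simp
  | succ k ih =>
    have h1 : S.card + k ≤ ((icStep ω)^[k] S).card :=
      ih fun j hj => h j (Nat.lt_succ_of_lt hj)
    have h2 : (icStep ω)^[k] S ⊂ icStep ω ((icStep ω)^[k] S) :=
      (Finset.ssubset_iff_of_subset (subset_icStep ω _)).2 (by
        by_contra hc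
        push_neg at hc
        exact h k (Nat.lt_succ_self k)
          (Finset.Subset.antisymm (fun x hx => hc x hx) (subset_icStep ω _)))
    have := Finset.card_lt_card h2
    rw [Function.iterate_succ_apply']
    omega

lemma icActivated_fixed [Fintype V] (ω : V → V → Bool) (S : Finset V)
    (hS : S.Nonempty) : icStep ω (icActivated ω S) = icActivated ω S := by
  by_cases h : ∃ k < Fintype.card V, icStep ω ((icStep ω)^[k] S) = (icStep ω)^[k] S
  · obtain ⟨k, hk, hfix⟩ := h
    have : icActivated ω S = (icStep ω)^[k] S := by
      unfold icActivated
      have : Fintype.card V = (Fintype.card V - k) + k := by omega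
      rw [this, Function.iterate_add_apply,
        icStep_iterate_fixed ω _ hfix]
    rw [this, hfix]
  · push_neg at h
    have := icStep_card_ge ω S (Fintype.card V) h
    have hS1 : 1 ≤ S.card := Finset.card_pos.2 hS
    have hle : ((icStep ω)^[Fintype.card V] S).card ≤ Fintype.card V :=
      Finset.card_le_univ _
    omega

lemma mem_icActivated_iff [Fintype V] (ω : V → V → Bool) (s w : V) :
    w ∈ icActivated ω {s} ↔ ReachB ω ∅ s w := by
  constructor
  · unfold icActivated
    generalize Fintype.card V = n
    induction n generalizing w with
    | zero => simp only [Function.iterate_zero, id_eq, Finset.mem_singleton]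
              rintro rfl; exact Relation.ReflTransGen.refl
    | succ n ih =>
      rw [Function.iterate_succ_apply']
      intro hw
      rcases Finset.mem_union.1 hw with hw | hw
      · exact ih w hw
      · simp only [Finset.mem_filter] at hw
        obtain ⟨-, u, hu, hedge⟩ := hw
        exact (ih u hu).tail ⟨hedge, by simp, by simp⟩
  · intro h
    induction h with
    | refl =>
        unfold icActivated
        generalize Fintype.card V = n
        induction n with
        | zero => simp
        | succ n ih => rw [Function.iterate_succ_apply']
                       exact subset_icStep ω _ ih
    | tail _ hbc ih =>
      rw [← icActivated_fixed ω {s} ⟨s, by simp⟩]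
      exact Finset.mem_union.2 (Or.inr (Finset.mem_filter.2
        ⟨Finset.mem_univ _, _, ih, hbc.1⟩))

/-- for a random sampled graph `g` derived from `G`, the expected
number `E[σ(s,g)]` of vertices reachable from the seed `s` equals the expected
spread `E({s}, G)` of the independent cascade model. -/
theorem expected_sigma_eq_icSpread [Fintype V] (p : V → V → ℝ)
    (hp : ∀ u v, 0 ≤ p u v ∧ p u v ≤ 1) (s : V) :
    (∑ ω : V → V → Bool, sampleWeight p ω * (sigmaB ω ∅ {s} : ℝ)) =
      icSpread p s := by
  unfold icSpread
  refine Finset.sum_congr rfl fun ω _ => ?_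
  congr 2
  unfold sigmaB
  congr 1
  ext w
  simp only [Finset.mem_filter, Finset.mem_univ, true_and, Finset.mem_singleton,
    exists_eq_left, mem_icActivated_iff]
end
end

section
/- Let g be a random sampled graph derived from G, and let u ≠ s be a fixed vertex. Then E[σ(s,g) − σ^{→u}(s,g)] = E({s}, G[V\{u}]), i.e., the expected number of vertices reachable from s in g not requiring passage through u equals the expected spread in G with u blocked. -/
/-!
Independent cascade model via random sampled (live-edge) graphs.
-/

open Finset

noncomputable section
open scoped Classical

variable {V : Type*}

/-- `sigmaThrough ω u s` = `σ^{→u}(s, ω)`: the number of vertices `w` reachable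
from `s` in the sampled graph `ω` such that every path from `s` to `w`
passes through `u`. -/
def sigmaThrough [Fintype V] (ω : V → V → Bool) (u s : V) : ℕ :=
  (Finset.univ.filter fun w => ReachB ω ∅ s w ∧ ¬ ReachB ω {u} s w).card

lemma ReachB.anti {ω : V → V → Bool} {B B' : Finset V} {s w : V} (hB : B ⊆ B')
    (h : ReachB ω B' s w) : ReachB ω B s w :=
  Relation.ReflTransGen.mono
    (fun _ _ ⟨hab, ha, hb⟩ => ⟨hab, fun h => ha (hB h), fun h => hb (hB h)⟩) _ _ h

lemma sigmaB_singleton [Fintype V] (ω : V → V → Bool) (B : Finset V) (s : V) :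
    sigmaB ω B {s} = #{w | ReachB ω B s w} := by
  simp [sigmaB]

lemma sigmaThrough_add_sigmaB [Fintype V] (ω : V → V → Bool) (u s : V) :
    sigmaThrough ω u s + sigmaB ω {u} {s} = sigmaB ω ∅ {s} := by
  have hblocked : univ.filter (fun w => ReachB ω {u} s w)
      = univ.filter (fun w => ReachB ω ∅ s w ∧ ReachB ω {u} s w) :=
    filter_congr fun _ _ => ⟨fun h => ⟨h.anti (empty_subset _), h⟩, And.right⟩
  rw [sigmaB_singleton, sigmaB_singleton, hblocked, sigmaThrough, add_comm,
    ← filter_filter, ← filter_filter]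
  exact card_filter_add_card_filter_not _

theorem expected_sigma_minus_through_eq_blocked_spread_general [Fintype V]
    (p : V → V → ℝ)
    (s u : V) :
    (∑ ω : V → V → Bool,
        sampleWeight p ω * ((sigmaB ω ∅ {s} : ℝ) - (sigmaThrough ω u s : ℝ))) =
      spread p {s} {u} := by
  refine sum_congr rfl fun ω _ => ?_
  rw [← sigmaThrough_add_sigmaB ω u s, Nat.cast_add, add_sub_cancel_left]

/-- `E[σ(s,g) - σ^{→u}(s,g)] = E({s}, G[V \ {u}])`: the expected
number of vertices reachable from `s` not requiring passage through `u` equals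
the expected spread in `G` with `u` blocked. -/
theorem expected_sigma_minus_through_eq_blocked_spread [Fintype V]
    (p : V → V → ℝ) (hp : ∀ u v, 0 ≤ p u v ∧ p u v ≤ 1)
    (s u : V) (hsu : u ≠ s) :
    (∑ ω : V → V → Bool,
        sampleWeight p ω * ((sigmaB ω ∅ {s} : ℝ) - (sigmaThrough ω u s : ℝ))) =
      spread p {s} {u} :=
  expected_sigma_minus_through_eq_blocked_spread_general p s u
end
end

section
/- In a directed graph g with source s, for any vertex u ≠ s, the number of vertices w such that w is reachable from s and every path from s to w passes through u equals the number of vertices in the subtree rooted at u in the dominator tree of g with respect to s. -/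
/-!
Dominators in a directed graph `g : V → V → Prop` with a source vertex `s`.
-/

open Finset

noncomputable section
open scoped Classical

variable {V : Type*}

/-- `w` is reachable from `s` in the directed graph `g`. -/
def Reach (g : V → V → Prop) (s w : V) : Prop :=
  Relation.ReflTransGen g s w

/-- `w` is reachable from `s` in `g` by a path avoiding the vertex `u`. -/
def ReachAvoid (g : V → V → Prop) (u s w : V) : Prop :=
  Relation.ReflTransGen (fun a b => g a b ∧ a ≠ u ∧ b ≠ u) s w

/-- `u` dominates `v` (w.r.t. source `s`): `v` is reachable from `s` and every
path from `s` to `v` passes through `u`. -/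
def Dominates (g : V → V → Prop) (s u v : V) : Prop :=
  Reach g s v ∧ (u = v ∨ ¬ ReachAvoid g u s v)

/-- `u` is the immediate dominator of `v`: `u` is a dominator of `v` other than
`v`, and every other dominator of `v` dominates `u`. -/
def IsIdom (g : V → V → Prop) (s u v : V) : Prop :=
  Dominates g s u v ∧ u ≠ v ∧ ∀ w, Dominates g s w v → w ≠ v → Dominates g s w u

/-- `v` lies in the subtree rooted at `u` of the dominator tree of `g` with
source `s` (i.e. `u` is an ancestor of `v`, or `v` itself, along immediate
dominator edges). -/
def InDomSubtree (g : V → V → Prop) (s u v : V) : Prop :=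
  Relation.ReflTransGen (fun a b => IsIdom g s a b) u v

/-!
The vertices counted on the left are exactly those dominated by `u`. Dominance is a partial
order: transitivity and antisymmetry come from cutting a path at the first or last visit of a
vertex. Hence strict dominance is well founded on a finite graph. Every reachable `w ≠ s` has an
immediate dominator, namely the last strict dominator of `w` on any path to `w`, and `u`
dominates it whenever `u` strictly dominates `w`; so walking up immediate-dominator edges from a
vertex dominated by `u` reaches `u`, and conversely every vertex below `u` in the tree is
dominated by `u`.
-/

open Relation

def StrictlyDominates (g : V → V → Prop) (s d w : V) : Prop :=
  Dominates g s d w ∧ d ≠ w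

section Dominators

variable {g : V → V → Prop} {s u w : V}

theorem ReachAvoid.ne_of_source_ne (h : ReachAvoid g u s w) (hs : s ≠ u) : w ≠ u := by
  rcases ReflTransGen.cases_tail h with rfl | ⟨_, _, _, _, hwu⟩
  exacts [hs, hwu]

theorem ReachAvoid.eq_source_of_avoid_source (h : ReachAvoid g s s w) : w = s := by
  rcases ReflTransGen.cases_head h with rfl | ⟨_, ⟨_, hss, _⟩, _⟩
  exacts [rfl, absurd rfl hss]

theorem not_reachAvoid_self (hus : u ≠ s) : ¬ ReachAvoid g u s u :=
  fun h => h.ne_of_source_ne hus.symm rfl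

theorem dominates_iff_of_ne (hus : u ≠ s) :
    Dominates g s u w ↔ Reach g s w ∧ ¬ ReachAvoid g u s w := by
  refine ⟨fun ⟨hw, h⟩ => ⟨hw, ?_⟩, fun ⟨hw, h⟩ => ⟨hw, Or.inr h⟩⟩
  rcases h with rfl | h
  exacts [not_reachAvoid_self hus, h]

theorem dominates_source (h : Reach g s w) : Dominates g s s w :=
  ⟨h, or_iff_not_imp_right.2 fun hw =>
    (ReachAvoid.eq_source_of_avoid_source (not_not.1 hw)).symm⟩

/-- A path avoiding `a` either avoids `b` too, or its prefix up to the first `b` reaches `b`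
while avoiding `a`. -/
theorem ReachAvoid.reachAvoid_or_reachAvoid {a b c : V} (h : ReachAvoid g a s c) :
    ReachAvoid g b s c ∨ ReachAvoid g a s b := by
  induction h with
  | refl => exact Or.inl ReflTransGen.refl
  | @tail x c hx hxc ih =>
    by_cases hxb : x = b
    · exact Or.inr (hxb ▸ hx)
    by_cases hcb : c = b
    · exact Or.inr (hcb ▸ ReflTransGen.tail hx hxc)
    exact ih.imp_left fun h => ReflTransGen.tail h ⟨hxc.1, hxb, hcb⟩

theorem dominates_trans {a b c : V} (hab : Dominates g s a b) (hbc : Dominates g s b c) :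
    Dominates g s a c := by
  rcases hab.2 with rfl | hab'
  · exact hbc
  rcases hbc.2 with rfl | hbc'
  · exact hab
  exact ⟨hbc.1, Or.inr fun hac => hac.reachAvoid_or_reachAvoid.elim hbc' hab'⟩

/-- Following a path from `s`, the first of the two vertices `a`, `b` it meets is reached by a
path avoiding the other one. -/
theorem reachAvoid_or_reachAvoid_of_reach {a b c : V} (hab : a ≠ b) (ha : s ≠ a) (hb : s ≠ b)
    (h : Reach g s c) :
    ReachAvoid g a s c ∧ ReachAvoid g b s c ∨ ReachAvoid g b s a ∨ ReachAvoid g a s b := by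
  induction h with
  | refl => exact Or.inl ⟨ReflTransGen.refl, ReflTransGen.refl⟩
  | @tail x c _ hxc ih =>
    rcases ih with ⟨hxa, hxb⟩ | h
    · have hxa' := hxa.ne_of_source_ne ha
      have hxb' := hxb.ne_of_source_ne hb
      by_cases hca : c = a
      · exact Or.inr (Or.inl (hca ▸ ReflTransGen.tail hxb ⟨hxc, hxb', hca ▸ hab⟩))
      by_cases hcb : c = b
      · exact Or.inr (Or.inr (hcb ▸ ReflTransGen.tail hxa ⟨hxc, hxa', hcb ▸ hab.symm⟩))
      exact Or.inl
        ⟨ReflTransGen.tail hxa ⟨hxc, hxa', hca⟩, ReflTransGen.tail hxb ⟨hxc, hxb', hcb⟩⟩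
    · exact Or.inr h

theorem dominates_antisymm {a b : V} (hab : Dominates g s a b) (hba : Dominates g s b a) :
    a = b := by
  by_contra hne
  have hab' := hab.2.resolve_left hne
  have hba' := hba.2.resolve_left (Ne.symm hne)
  have ha : s ≠ a := fun h => hba' (h ▸ ReflTransGen.refl)
  have hb : s ≠ b := fun h => hab' (h ▸ ReflTransGen.refl)
  rcases reachAvoid_or_reachAvoid_of_reach hne ha hb hab.1 with ⟨_, hbb⟩ | h | h
  exacts [hbb.ne_of_source_ne hb rfl, hba' h, hab' h]

theorem wellFounded_strictlyDominates [Finite V] : WellFounded (StrictlyDominates g s) :=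
  haveI : IsTrans V (StrictlyDominates g s) :=
    ⟨fun _ _ _ hab hbc => ⟨dominates_trans hab.1 hbc.1,
      fun hac => hbc.2 (dominates_antisymm hbc.1 (hac ▸ hab.1))⟩⟩
  haveI : Std.Irrefl (StrictlyDominates g s) := ⟨fun _ h => h.2 rfl⟩
  Finite.wellFounded_of_trans_of_irrefl _

theorem Relation.ReflTransGen.exists_last {r : V → V → Prop} {p : V → Prop} {a b : V}
    (ha : p a) (h : ReflTransGen r a b) :
    ∃ d, p d ∧ ReflTransGen r a d ∧ ReflTransGen (fun x y => r x y ∧ ¬ p y) d b := by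
  induction h with
  | refl => exact ⟨a, ha, ReflTransGen.refl, ReflTransGen.refl⟩
  | @tail x c hx hxc ih =>
    by_cases hc : p c
    · exact ⟨c, hc, ReflTransGen.tail hx hxc, ReflTransGen.refl⟩
    obtain ⟨d, hd, had, hdx⟩ := ih
    exact ⟨d, hd, had, ReflTransGen.tail hdx ⟨hxc, hc⟩⟩

theorem ReachAvoid.trans_of_avoid_targets {v : V} (h : ReachAvoid g u s v) (hs : s ≠ u)
    (hvw : ReflTransGen (fun x y => g x y ∧ y ≠ u) v w) : ReachAvoid g u s w := by
  induction hvw with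
  | refl => exact h
  | @tail x y _ hxy ih => exact ReflTransGen.tail ih ⟨hxy.1, ih.ne_of_source_ne hs, hxy.2⟩

/-- Take `d` the last strict dominator of `w` on a path to `w`: a strict dominator of `w`
avoided by some path to `d` would be avoided by a path to `w`. -/
theorem exists_isIdom (hw : Reach g s w) (hws : w ≠ s) : ∃ d, IsIdom g s d w := by
  obtain ⟨d, ⟨hdw, hdw'⟩, hsd, hdw_path⟩ :=
    ReflTransGen.exists_last (p := (StrictlyDominates g s · w))
      ⟨dominates_source hw, hws.symm⟩ hw
  refine ⟨d, hdw, hdw', fun x hxw hxw' => ?_⟩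
  by_cases hxs : x = s
  · rw [hxs]
    exact dominates_source hsd
  refine ⟨hsd, or_iff_not_imp_left.2 fun hxd hsxd => ?_⟩
  have hdw_avoid : ReflTransGen (fun a b => g a b ∧ b ≠ x) d w :=
    ReflTransGen.mono (fun _ _ hab => ⟨hab.1, fun hbx => hab.2 (hbx ▸ ⟨hxw, hxw'⟩)⟩)
      _ _ hdw_path
  exact (hxw.2.resolve_left hxw') (hsxd.trans_of_avoid_targets (Ne.symm hxs) hdw_avoid)

theorem Dominates.of_inDomSubtree {v : V} (hu : Reach g s u) (h : InDomSubtree g s u v) :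
    Dominates g s u v := by
  induction h with
  | refl => exact ⟨hu, Or.inl rfl⟩
  | tail _ hidom ih => exact dominates_trans ih hidom.1

theorem InDomSubtree.of_dominates [Finite V] (hus : u ≠ s) (h : Dominates g s u w) :
    InDomSubtree g s u w := by
  induction w using (wellFounded_strictlyDominates (g := g) (s := s)).induction with
  | _ w ih =>
    by_cases huw : u = w
    · exact huw ▸ ReflTransGen.refl
    have hws : w ≠ s := by
      rintro rfl
      exact ((dominates_iff_of_ne hus).1 h).2 ReflTransGen.refl
    obtain ⟨d, hidom⟩ := exists_isIdom h.1 hws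
    exact ReflTransGen.tail (ih d ⟨hidom.1, hidom.2.1⟩ (hidom.2.2 u h huw)) hidom

theorem dominates_iff_inDomSubtree [Finite V] (hus : u ≠ s) (hu : Reach g s u) :
    Dominates g s u w ↔ InDomSubtree g s u w :=
  ⟨InDomSubtree.of_dominates hus, Dominates.of_inDomSubtree hu⟩

end Dominators

/-- for any vertex `u ≠ s` reachable from the source, the number
of vertices `w` reachable from `s` such that every path from `s` to `w` passes
through `u` equals the number of vertices in the subtree rooted at `u` of the
dominator tree of `g`. -/
theorem card_through_eq_card_domSubtree [Fintype V] (g : V → V → Prop)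
    (s u : V) (hus : u ≠ s) (hreach : Reach g s u) :
    (Finset.univ.filter fun w => Reach g s w ∧ ¬ ReachAvoid g u s w).card =
      (Finset.univ.filter fun v => InDomSubtree g s u v).card := by
  congr 1
  exact Finset.filter_congr fun _ _ =>
    (dominates_iff_of_ne hus).symm.trans (dominates_iff_inDomSubtree hus hreach)
end
end

section
/- In a directed graph with source s, if u dominates v and w dominates v with u ≠ w and both u,w ≠ v, then either u dominates w or w dominates u; consequently, every vertex v ≠ s reachable from s has a unique immediate dominator. -/
/-!
Dominators in a directed graph `g : V → V → Prop` with a source vertex `s`.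
-/

open Finset

noncomputable section
open scoped Classical

variable {V : Type*}

/-! Every dominator of `v` lies on any fixed path from `s` to `v`, so `v` has finitely many
dominators. Two strict dominators `u ≠ w` of `v` are comparable: otherwise each is reachable
from `s` avoiding the other, and then every path from `s` first meets `u` or `w` through a path
avoiding the other one, so one of them fails to dominate `v`. Hence the strict dominators of `v`
form a finite chain, whose deepest element is the unique immediate dominator. -/

namespace Relation.ReflTransGen

variable {α : Type*} {r : α → α → Prop} {a b c : α}

theorem avoids_or_reaches (h : ReflTransGen r a b) (c : α) :
    ReflTransGen (fun x y => r x y ∧ x ≠ c ∧ y ≠ c) a b ∨ ReflTransGen r a c := by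
  induction h with
  | refl => exact .inl .refl
  | @tail x y hx hxy ih =>
    rcases ih with ih | ih
    · by_cases hy : y = c
      · exact .inr (hy ▸ hx.tail hxy)
      by_cases hxc : x = c
      · exact .inr (hxc ▸ hx)
      exact .inl (ih.tail ⟨hxy, hxc, hy⟩)
    · exact .inr ih

theorem ne_of_avoids (h : ReflTransGen (fun x y => r x y ∧ x ≠ c ∧ y ≠ c) a b) (ha : a ≠ c) :
    b ≠ c := by
  induction h with
  | refl => exact ha
  | tail _ hxy => exact hxy.2.2

theorem eq_of_avoids_start (h : ReflTransGen (fun x y => r x y ∧ x ≠ a ∧ y ≠ a) a b) :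
    b = a := by
  rcases h.cases_head with rfl | ⟨_, hab, _⟩
  · rfl
  · exact absurd rfl hab.2.1

theorem stops_at_target (h : ReflTransGen r a b) :
    ReflTransGen (fun x y => r x y ∧ x ≠ b) a b := by
  induction h using head_induction_on with
  | refl => exact .refl
  | @head x y hxy _ ih =>
    by_cases hx : x = b
    · exact hx ▸ .refl
    · exact .head ⟨hxy, hx⟩ ih

theorem avoids_of_stops (h : ReflTransGen (fun x y => r x y ∧ x ≠ c) a b) (hb : b ≠ c) :
    ReflTransGen (fun x y => r x y ∧ x ≠ c ∧ y ≠ c) a b := by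
  induction h with
  | refl => exact .refl
  | @tail x y _ hxy ih => exact (ih hxy.2).tail ⟨hxy.1, hxy.2, hb⟩

theorem finite_setOf_not_avoids (h : ReflTransGen r a b) :
    {c | ¬ ReflTransGen (fun x y => r x y ∧ x ≠ c ∧ y ≠ c) a b}.Finite := by
  induction h with
  | refl => exact Set.finite_empty.subset fun _ hc => hc .refl
  | @tail x y _ hxy ih =>
    refine ((ih.insert x).insert y).subset fun c hc => ?_
    by_contra! hcxy
    simp only [Set.mem_insert_iff, Set.mem_ofPred_eq, not_or, not_not] at hcxy
    exact hc (hcxy.2.2.tail ⟨hxy, Ne.symm hcxy.2.1, Ne.symm hcxy.1⟩)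

end Relation.ReflTransGen

section Dominators

open Relation

variable {g : V → V → Prop} {s u v w x : V}

theorem Dominates.not_reachAvoid (h : Dominates g s u v) (huv : u ≠ v) :
    ¬ ReachAvoid g u s v :=
  h.2.resolve_left huv

theorem reachAvoid_of_not_dominates (hv : Reach g s v) (h : ¬ Dominates g s u v) :
    ReachAvoid g u s v := by
  simp only [Dominates, hv, true_and, not_or, not_not] at h
  exact h.2

theorem Dominates.reach (h : Dominates g s u v) : Reach g s u := by
  rcases eq_or_ne u v with rfl | huv
  · exact h.1
  · exact (ReflTransGen.avoids_or_reaches h.1 u).resolve_left (h.not_reachAvoid huv)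

theorem dominates_self (h : Reach g s u) : Dominates g s u u :=
  ⟨h, .inl rfl⟩

theorem source_dominates (h : Reach g s v) : Dominates g s s v :=
  ⟨h, or_iff_not_imp_left.2 fun hsv hRA => hsv (ReflTransGen.eq_of_avoids_start hRA).symm⟩

theorem Dominates.trans (h₁ : Dominates g s u w) (h₂ : Dominates g s w x) :
    Dominates g s u x := by
  rcases eq_or_ne u w with rfl | huw
  · exact h₂
  refine ⟨h₂.1, or_iff_not_imp_left.2 fun hux hRA => ?_⟩
  rcases eq_or_ne w x with rfl | hwx
  · exact h₁.not_reachAvoid hux hRA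
  rcases ReflTransGen.avoids_or_reaches hRA w with h | h
  · exact h₂.not_reachAvoid hwx (ReflTransGen.mono (fun _ _ hab => ⟨hab.1.1, hab.2⟩) _ _ h)
  · exact h₁.not_reachAvoid huw h

theorem Dominates.antisymm (h₁ : Dominates g s u w) (h₂ : Dominates g s w u) : u = w := by
  by_contra huw
  rcases (ReflTransGen.stops_at_target h₁.1).avoids_or_reaches u with h | h
  · exact h₁.not_reachAvoid huw (ReflTransGen.mono (fun _ _ hab => ⟨hab.1.1, hab.2⟩) _ _ h)
  · exact h₂.not_reachAvoid (Ne.symm huw) (h.avoids_of_stops huw)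

theorem finite_setOf_dominates (h : Reach g s v) : {u | Dominates g s u v}.Finite :=
  ((ReflTransGen.finite_setOf_not_avoids h).insert v).subset fun _ hu =>
    hu.2.elim .inl .inr

theorem reachAvoid_or_reachAvoid (hP : ReachAvoid g u s w) (hQ : ReachAvoid g w s u) (huw : u ≠ w)
    (hx : Reach g s x) : ReachAvoid g u s x ∨ ReachAvoid g w s x := by
  have hsu : s ≠ u := by rintro rfl; exact huw (ReflTransGen.eq_of_avoids_start hP).symm
  have hsw : s ≠ w := by rintro rfl; exact huw (ReflTransGen.eq_of_avoids_start hQ)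
  induction hx with
  | refl => exact .inl .refl
  | @tail x y _ hxy ih =>
    rcases ih with ih | ih
    · by_cases hy : y = u
      · exact .inr (hy ▸ hQ)
      · exact .inl (ih.tail ⟨hxy, ih.ne_of_avoids hsu, hy⟩)
    · by_cases hy : y = w
      · exact .inl (hy ▸ hP)
      · exact .inr (ih.tail ⟨hxy, ih.ne_of_avoids hsw, hy⟩)

theorem Dominates.total (hu : Dominates g s u v) (hw : Dominates g s w v) (huv : u ≠ v)
    (hwv : w ≠ v) : Dominates g s u w ∨ Dominates g s w u := by
  by_contra! h
  have huw : u ≠ w := by rintro rfl; exact h.1 (dominates_self hu.reach)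
  have hP := reachAvoid_of_not_dominates hw.reach h.1
  have hQ := reachAvoid_of_not_dominates hu.reach h.2
  rcases reachAvoid_or_reachAvoid hP hQ huw hu.1 with h | h
  exacts [hu.not_reachAvoid huv h, hw.not_reachAvoid hwv h]

theorem exists_isIdom_s6 (hv : v ≠ s) (hr : Reach g s v) : ∃ u, IsIdom g s u v := by
  have hfin : {u | Dominates g s u v ∧ u ≠ v}.Finite :=
    (finite_setOf_dominates hr).subset fun _ hu => hu.1
  -- the deepest strict dominator is one whose set of dominators is maximal
  obtain ⟨u, ⟨huv, hne⟩, hmax⟩ := hfin.exists_maximalFor (fun u => {w | Dominates g s w u}) _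
    ⟨s, source_dominates hr, hv.symm⟩
  refine ⟨u, huv, hne, fun w hwv hw => (hwv.total huv hw hne).elim id fun huw => ?_⟩
  exact hmax ⟨hwv, hw⟩ (fun x hx => hx.trans huw) (dominates_self hwv.reach)

theorem IsIdom.unique (hu : IsIdom g s u v) (hw : IsIdom g s w v) : u = w :=
  (hw.2.2 u hu.1 hu.2.1).antisymm (hu.2.2 w hw.1 hw.2.1)

end Dominators

theorem dominators_comparable_and_unique_idom_general (g : V → V → Prop)
    (s : V) :
    (∀ u w v : V, Dominates g s u v → Dominates g s w v →
      u ≠ w → u ≠ v → w ≠ v → (Dominates g s u w ∨ Dominates g s w u)) ∧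
    (∀ v : V, v ≠ s → Reach g s v → ∃! u : V, IsIdom g s u v) := by
  refine ⟨fun u w v hu hw _ huv hwv => hu.total hw huv hwv, fun v hv hr => ?_⟩
  obtain ⟨u, hu⟩ := exists_isIdom_s6 hv hr
  exact ⟨u, hu, fun w hw => hw.unique hu⟩

/-- two distinct dominators `u, w` of a vertex `v` (both different
from `v`) are comparable: `u` dominates `w` or `w` dominates `u`.
Consequently every vertex `v ≠ s` reachable from `s` has a unique immediate
dominator. -/
theorem dominators_comparable_and_unique_idom [Fintype V] (g : V → V → Prop)
    (s : V) :
    (∀ u w v : V, Dominates g s u v → Dominates g s w v →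
      u ≠ w → u ≠ v → w ≠ v → (Dominates g s u w ∨ Dominates g s w u)) ∧
    (∀ v : V, v ≠ s → Reach g s v → ∃! u : V, IsIdom g s u v) :=
  dominators_comparable_and_unique_idom_general g s
end
end

section
/- Merging multiple seeds into a single unified seed preserves the expected spread: given seeds S and a non-seed vertex u with in-edges from h distinct seeds having probabilities p_1,…,p_h, replacing these h edges by a single edge from a new seed s' to u with probability 1 − ∏_{i=1}^h (1 − p_i) (doing this for all non-seed vertices, and taking S' = {s'}) yields a graph whose expected spread from s' restricted to the original non-seed vertices equals the expected spread from S in the original graph. -/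
/-!
Independent cascade model via random sampled (live-edge) graphs.
-/

open Finset

noncomputable section
open scoped Classical

variable {V : Type*}

/-- Expected number of activated vertices among those in `T`, with seed set `S`
(no blockers). -/
def spreadOn [Fintype V] (p : V → V → ℝ) (S T : Finset V) : ℝ :=
  ∑ ω : V → V → Bool,
    sampleWeight p ω * ((T.filter fun w => ∃ s ∈ S, ReachB ω ∅ s w).card : ℝ)

/-- The graph obtained by merging all seeds of `S` into one unified seed (the
vertex `none` of `Option V`): for each non-seed vertex `u` the `h` seed edges
with probabilities `p₁, …, p_h` are replaced by a single edge from the unified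
seed with probability `1 - ∏ᵢ (1 - pᵢ)`; edges among non-seed vertices are
kept, and all edges incident to original seeds are removed. -/
def mergedP [Fintype V] (p : V → V → ℝ) (S : Finset V) :
    Option V → Option V → ℝ := fun a b =>
  match a, b with
  | none, some v => if v ∈ S then 0 else 1 - ∏ s ∈ S, (1 - p s v)
  | some a', some b' => if a' ∈ S ∨ b' ∈ S then 0 else p a' b'
  | _, none => 0

/-!
Couple the two live-edge models. From a sample `ω` of the original graph build the sample
`mergeSample S ω` of the merged graph: the edge from the unified seed to `v ∉ S` is live iff some
seed edge into `v` is live, and live edges between non-seeds are copied. A non-seed `w` is reached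
from `S` in `ω` iff it is reached from the unified seed in `mergeSample S ω`, since a path from
`S` can be cut at its last seed. Moreover `mergeSample S ω` has exactly the distribution of the
merged model: the edges into distinct targets are independent, and among the edges into `v` the
event "some seed edge is live" has probability `1 - ∏ s ∈ S, (1 - p s v)` and is independent of
the non-seed edges into `v`. So both expected counts are the same sum.
-/

def bernWeight (q : ℝ) (b : Bool) : ℝ := if b then q else 1 - q

lemma bernWeight_zero (b : Bool) : bernWeight 0 b = if b = false then 1 else 0 := by
  cases b <;> simp [bernWeight]

section BernoulliProduct

variable {ι : Type*} [Fintype ι] [DecidableEq ι]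

lemma sum_prod_bernWeight_mul (q : ι → ℝ) (K : ι → Bool → ℝ) :
    ∑ c : ι → Bool, ∏ i, bernWeight (q i) (c i) * K i (c i) =
      ∏ i, (q i * K i true + (1 - q i) * K i false) := by
  rw [← Fintype.prod_sum fun i b => bernWeight (q i) b * K i b]
  simp [bernWeight]

lemma sum_ite_forall_prod_bernWeight_mul (q : ι → ℝ) (K : ι → Bool → ℝ) (S : Finset ι)
    (hK : ∀ i ∈ S, K i true = K i false) :
    ∑ c : ι → Bool, (if ∀ i ∈ S, c i = false then
        ∏ i, bernWeight (q i) (c i) * K i (c i) else 0) =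
      (∏ i ∈ S, (1 - q i)) * ∏ i, (q i * K i true + (1 - q i) * K i false) := by
  have (c : ι → Bool) :
      (if ∀ i ∈ S, c i = false then ∏ i, bernWeight (q i) (c i) * K i (c i) else 0) =
        ∏ i, bernWeight (q i) (c i) * (if i ∈ S ∧ c i = true then 0 else K i (c i)) := by
    by_cases h : ∀ i ∈ S, c i = false
    · rw [if_pos h]
      refine Finset.prod_congr rfl fun i _ => ?_
      by_cases hi : i ∈ S <;> simp [hi, h]
    · push Not at h
      obtain ⟨i, hi, hci⟩ := h
      simp only [ne_eq, Bool.not_eq_false] at hci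
      rw [if_neg fun h => by simp [h i hi] at hci, eq_comm]
      exact Finset.prod_eq_zero (Finset.mem_univ i) (by simp [hi, hci])
  rw [Finset.sum_congr rfl fun c _ => this c,
    sum_prod_bernWeight_mul q fun i b => if i ∈ S ∧ b = true then 0 else K i b,
    ← Finset.prod_ite_mem_eq S, ← Finset.prod_mul_distrib]
  refine Finset.prod_congr rfl fun i _ => ?_
  by_cases hi : i ∈ S
  · simp only [hi, hK i hi, true_and, if_true, Bool.false_eq_true, and_false, if_false]
    ring
  · simp [hi]

/-- At least one of the independent trials indexed by `S` succeeds with probability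
`1 - ∏ i ∈ S, (1 - q i)`, independently of any factors `K i` blind to the trials in `S`. -/
lemma sum_ite_exists_prod_bernWeight_mul (q : ι → ℝ) (K : ι → Bool → ℝ) (S : Finset ι)
    (hK : ∀ i ∈ S, K i true = K i false) (b : Bool) :
    ∑ c : ι → Bool, (if decide (∃ i ∈ S, c i = true) = b then
        ∏ i, bernWeight (q i) (c i) * K i (c i) else 0) =
      bernWeight (1 - ∏ i ∈ S, (1 - q i)) b * ∏ i, (q i * K i true + (1 - q i) * K i false) := by
  have none_fires := sum_ite_forall_prod_bernWeight_mul q K S hK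
  cases b
  · simpa [bernWeight] using none_fires
  · have (c : ι → Bool) :
        (if decide (∃ i ∈ S, c i = true) = true then
          ∏ i, bernWeight (q i) (c i) * K i (c i) else 0) =
        ∏ i, bernWeight (q i) (c i) * K i (c i) -
          if ∀ i ∈ S, c i = false then ∏ i, bernWeight (q i) (c i) * K i (c i) else 0 := by
      by_cases h : ∃ i ∈ S, c i = true
      · have : ¬ ∀ i ∈ S, c i = false := by simpa using h
        simp [h, this]
      · have : ∀ i ∈ S, c i = false := by simpa using h
        simp [h, if_pos this]
    rw [Finset.sum_congr rfl fun c _ => this c, Finset.sum_sub_distrib,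
      sum_prod_bernWeight_mul, none_fires]
    simp only [bernWeight, if_true]
    ring

end BernoulliProduct

def mergeColumn (S : Finset V) (v : V) (c : V → Bool) : Option V → Bool
  | none => decide (v ∉ S ∧ ∃ s ∈ S, c s = true)
  | some a => decide (a ∉ S ∧ v ∉ S ∧ c a = true)

def mergeSample (S : Finset V) (ω : V → V → Bool) (x : Option V) : Option V → Bool
  | none => false
  | some v => mergeColumn S v (fun u => ω u v) x

lemma sum_ite_mergeColumn_eq [Fintype V] (p : V → V → ℝ) (S : Finset V) (v : V)
    (d : Option V → Bool) :
    ∑ c : V → Bool, (if mergeColumn S v c = d then ∏ u, bernWeight (p u v) (c u) else 0) =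
      ∏ x, bernWeight (mergedP p S x (some v)) (d x) := by
  rw [Fintype.prod_option]
  by_cases hv : v ∈ S
  · have hcol (c : V → Bool) : mergeColumn S v c = fun _ => false := by
      ext x; cases x <;> simp [mergeColumn, hv]
    have hmerged (x : Option V) : mergedP p S x (some v) = 0 := by
      cases x <;> simp [mergedP, hv]
    have total : ∑ c : V → Bool, ∏ u, bernWeight (p u v) (c u) = 1 := by
      simpa [bernWeight] using sum_prod_bernWeight_mul (fun u => p u v) fun _ _ => 1
    rw [← Fintype.prod_option fun x => bernWeight (mergedP p S x (some v)) (d x)]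
    simp only [hcol, hmerged, bernWeight_zero, Finset.prod_boole, Finset.sum_ite_irrel, total,
      Finset.sum_const_zero, Finset.mem_univ, true_imp_iff]
    exact if_congr ⟨fun h x => (congrFun h x).symm, fun h => funext fun x => (h x).symm⟩ rfl rfl
  · have hcol (c : V → Bool) :
        (if mergeColumn S v c = d then ∏ u, bernWeight (p u v) (c u) else 0) =
          if decide (∃ s ∈ S, c s = true) = d none then ∏ u, bernWeight (p u v) (c u) *
            (if decide (u ∉ S ∧ c u = true) = d (some u) then 1 else 0) else 0 := by
      have hmerge : mergeColumn S v c = d ↔ decide (∃ s ∈ S, c s = true) = d none ∧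
          ∀ a, decide (a ∉ S ∧ c a = true) = d (some a) := by
        simp [funext_iff, Option.forall, mergeColumn, hv]
      rw [Finset.prod_mul_distrib, Finset.prod_boole]
      simp only [hmerge, ite_and, Finset.mem_univ, true_imp_iff, mul_ite, mul_one, mul_zero]
    rw [Finset.sum_congr rfl fun c _ => hcol c, sum_ite_exists_prod_bernWeight_mul (p · v)
      (fun u b => if decide (u ∉ S ∧ b = true) = d (some u) then 1 else 0) S
      (fun u hu => by simp [hu]) (d none)]
    congr 1
    · simp [mergedP, hv]
    · refine Finset.prod_congr rfl fun a _ => ?_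
      by_cases ha : a ∈ S <;> cases d (some a) <;> simp [bernWeight, mergedP, ha, hv]

lemma mergeSample_eq_iff (S : Finset V) (ω : V → V → Bool) (ω' : Option V → Option V → Bool) :
    mergeSample S ω = ω' ↔ (∀ x, ω' x none = false) ∧
      ∀ v, mergeColumn S v (fun u => ω u v) = fun x => ω' x (some v) := by
  constructor
  · rintro rfl
    exact ⟨fun _ => rfl, fun _ => rfl⟩
  · rintro ⟨hnone, hsome⟩
    funext x t
    cases t with
    | none => exact (hnone x).symm
    | some v => exact congrFun (hsome v) x

lemma sum_sampleWeight_mergeSample_fiber [Fintype V] (p : V → V → ℝ) (S : Finset V)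
    (ω' : Option V → Option V → Bool) :
    ∑ ω ∈ univ.filter (fun ω => mergeSample S ω = ω'), sampleWeight p ω =
      sampleWeight (mergedP p S) ω' := by
  have hcols : ∑ ω : V → V → Bool,
      (if ∀ v, mergeColumn S v (fun u => ω u v) = (fun x => ω' x (some v))
        then sampleWeight p ω else 0) =
      ∏ v, ∏ x, bernWeight (mergedP p S x (some v)) (ω' x (some v)) := by
    simp_rw [← sum_ite_mergeColumn_eq, Fintype.prod_sum]
    rw [← (Equiv.piComm _).sum_comp]
    refine Finset.sum_congr rfl fun ω _ => ?_
    rw [Finset.prod_ite_zero, sampleWeight, Finset.prod_comm]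
    simp only [Finset.mem_univ, true_imp_iff]
    rfl
  have hnone : ∏ x, bernWeight (mergedP p S x none) (ω' x none) =
      if ∀ x, ω' x none = false then 1 else 0 := by
    have (x : Option V) : mergedP p S x none = 0 := by cases x <;> rfl
    simp only [this, bernWeight_zero, Finset.prod_boole, Finset.mem_univ, true_imp_iff]
  have hW : sampleWeight (mergedP p S) ω' =
      (∏ x, bernWeight (mergedP p S x none) (ω' x none)) *
        ∏ v, ∏ x, bernWeight (mergedP p S x (some v)) (ω' x (some v)) := by
    rw [sampleWeight, Finset.prod_comm, Fintype.prod_option]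
    rfl
  rw [Finset.sum_filter]
  simp_rw [mergeSample_eq_iff, ite_and]
  rw [Finset.sum_ite_irrel, hcols, hW, hnone, Finset.sum_const_zero, ite_mul, one_mul, zero_mul]

lemma reachB_empty_iff (ω : V → V → Bool) (s w : V) :
    ReachB ω ∅ s w ↔ Relation.ReflTransGen (fun a b => ω a b = true) s w := by
  simp [ReachB]

section MergedReachability

variable (S : Finset V) (ω : V → V → Bool)

@[simp]
lemma mergeSample_none_some_eq_true {v : V} :
    mergeSample S ω none (some v) = true ↔ v ∉ S ∧ ∃ s ∈ S, ω s v = true := by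
  simp [mergeSample, mergeColumn]

@[simp]
lemma mergeSample_some_some_eq_true {a b : V} :
    mergeSample S ω (some a) (some b) = true ↔ a ∉ S ∧ b ∉ S ∧ ω a b = true := by
  simp [mergeSample, mergeColumn]

lemma reflTransGen_mergeSample_iff {w : V} (hw : w ∉ S) :
    Relation.ReflTransGen (fun a b => mergeSample S ω a b = true) none (some w) ↔
      ∃ s ∈ S, Relation.ReflTransGen (fun a b => ω a b = true) s w := by
  constructor
  · intro h
    generalize hw' : some w = w' at h
    induction h generalizing w with
    | refl => cases hw'
    | @tail x y _ hxy ih =>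
      subst hw'
      cases x with
      | none =>
        obtain ⟨-, s, hs, hsw⟩ := (mergeSample_none_some_eq_true S ω).1 hxy
        exact ⟨s, hs, .single hsw⟩
      | some x =>
        obtain ⟨hx, -, hxw⟩ := (mergeSample_some_some_eq_true S ω).1 hxy
        obtain ⟨s, hs, hsx⟩ := ih hx rfl
        exact ⟨s, hs, hsx.tail hxw⟩
  · rintro ⟨s, hs, h⟩
    suffices ∀ y, Relation.ReflTransGen (fun a b => ω a b = true) s y → y ∉ S →
        Relation.ReflTransGen (fun a b => mergeSample S ω a b = true) none (some y) from
      this w h hw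
    intro y h hy
    induction h with
    | refl => exact absurd hs hy
    | @tail x y _ hxy ih =>
      by_cases hx : x ∈ S
      · exact .single ((mergeSample_none_some_eq_true S ω).2 ⟨hy, x, hx, hxy⟩)
      · exact (ih hx).tail ((mergeSample_some_some_eq_true S ω).2 ⟨hx, hy, hxy⟩)

lemma card_filter_reachB_mergeSample [Fintype V] :
    (((univ \ S).image some).filter fun w =>
        ∃ s ∈ ({none} : Finset (Option V)), ReachB (mergeSample S ω) ∅ s w).card =
      ((univ \ S).filter fun w => ∃ s ∈ S, ReachB ω ∅ s w).card := by
  rw [Finset.filter_image, Finset.card_image_of_injective _ (Option.some_injective V)]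
  refine congrArg Finset.card (Finset.filter_congr fun w hw => ?_)
  simp only [Finset.mem_singleton, exists_eq_left, reachB_empty_iff]
  exact reflTransGen_mergeSample_iff S ω (Finset.mem_sdiff.1 hw).2

end MergedReachability

lemma sum_fiberwise_mul_of_maps_to {α β R : Type*} [DecidableEq β]
    [NonUnitalNonAssocSemiring R] {s : Finset α} {t : Finset β} {f : α → β}
    (hf : ∀ a ∈ s, f a ∈ t) (w : α → R) (g : β → R) :
    ∑ b ∈ t, (∑ a ∈ s with f a = b, w a) * g b = ∑ a ∈ s, w a * g (f a) := by
  rw [← Finset.sum_fiberwise_of_maps_to hf]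
  refine Finset.sum_congr rfl fun b _ => ?_
  rw [Finset.sum_mul]
  exact Finset.sum_congr rfl fun a ha => by rw [(Finset.mem_filter.1 ha).2]

theorem merge_seeds_preserves_spread_general [Fintype V] (p : V → V → ℝ)
    (S : Finset V) :
    spreadOn (mergedP p S) {(none : Option V)}
        ((Finset.univ \ S).image (fun v => (some v : Option V))) =
      spreadOn p S (Finset.univ \ S) := by
  simp only [spreadOn]
  simp_rw [← sum_sampleWeight_mergeSample_fiber p S]
  -- `Finset.mem_univ` would synthesize a `Fintype` instance other than the classical one in `univ`
  rw [sum_fiberwise_mul_of_maps_to fun _ _ => by simp]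
  simp_rw [card_filter_reachB_mergeSample]

/-- merging multiple seeds into a single unified seed preserves
the expected spread: the expected number of activated original non-seed
vertices with the unified seed `none` in the merged graph equals the expected
number of activated non-seed vertices with seed set `S` in the original
graph. -/
theorem merge_seeds_preserves_spread [Fintype V] (p : V → V → ℝ)
    (hp : ∀ u v, 0 ≤ p u v ∧ p u v ≤ 1) (S : Finset V) :
    spreadOn (mergedP p S) {(none : Option V)}
        ((Finset.univ \ S).image (fun v => (some v : Option V))) =
      spreadOn p S (Finset.univ \ S) :=
  merge_seeds_preserves_spread_general p S
end
end

section
/- For the construction reducing Densest-k-Subgraph to Influence Minimization (graph G' with seed S, one vertex c_i per original vertex, one vertex d_j per original edge, all probabilities 1), blocking a set B ⊆ C of size k decreases the number of vertices reachable from S by exactly |B| + g, where g is the number of vertices d_j both of whose in-neighbors in C lie in B. -/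
/-!
The reduction graph from Densest-k-Subgraph to Influence Minimization.
The undirected graph `H` has `N` vertices and `M` edges, given by an
endpoint map `ends : Fin M → Fin N × Fin N`.  The reduction graph `G'` has
a seed vertex `Sum.inl ()`, a layer `C` of vertices `Sum.inr (Sum.inl i)`
(one per vertex of `H`) and a layer `D` of vertices `Sum.inr (Sum.inr j)`
(one per edge of `H`); the seed points to every vertex of `C`, and each
`c` points to the `D`-vertices of the edges it is an endpoint of.  All
propagation probabilities are `1`, so the spread equals the number of
vertices reachable from the seed after removing the blocked vertices.
-/

open Finset

noncomputable section
open scoped Classical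

/-- The vertex set of the reduction graph: seed ⊕ C ⊕ D. -/
abbrev DksV (N M : ℕ) := Unit ⊕ Fin N ⊕ Fin M

/-- Adjacency of the reduction graph. -/
def dksAdj {N M : ℕ} (ends : Fin M → Fin N × Fin N) :
    DksV N M → DksV N M → Prop
  | Sum.inl _, Sum.inr (Sum.inl _) => True
  | Sum.inr (Sum.inl i), Sum.inr (Sum.inr j) =>
      (ends j).1 = i ∨ (ends j).2 = i
  | _, _ => False

/-- Number of vertices reachable from the seed in the reduction graph after
removing the blocker set `B` (the spread, since all probabilities are `1`). -/
def dksSpread {N M : ℕ} (ends : Fin M → Fin N × Fin N)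
    (B : Finset (DksV N M)) : ℕ :=
  (Finset.univ.filter fun w : DksV N M =>
      Relation.ReflTransGen
        (fun a b => dksAdj ends a b ∧ a ∉ B ∧ b ∉ B) (Sum.inl ()) w).card

section Blocking

variable {N M : ℕ} (ends : Fin M → Fin N × Fin N) (B : Finset (Fin N))

def dksBlocked : Finset (DksV N M) := B.image fun i => Sum.inr (Sum.inl i)

def dksCovered : Finset (Fin M) := univ.filter fun j => (ends j).1 ∈ B ∧ (ends j).2 ∈ B

def dksCut : Finset (DksV N M) :=
  dksBlocked B ∪ (dksCovered ends B).image fun j => Sum.inr (Sum.inr j)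

@[simp]
lemma seed_notMem_dksBlocked : (Sum.inl () : DksV N M) ∉ dksBlocked B := by
  simp [dksBlocked]

@[simp]
lemma inr_inr_notMem_dksBlocked (j : Fin M) : (Sum.inr (Sum.inr j) : DksV N M) ∉ dksBlocked B := by
  simp [dksBlocked]

@[simp]
lemma inr_inl_mem_dksBlocked {i : Fin N} :
    (Sum.inr (Sum.inl i) : DksV N M) ∈ dksBlocked B ↔ i ∈ B := by
  simp [dksBlocked]

lemma notMem_dksCut_iff (w : DksV N M) :
    w ∉ dksCut ends B ↔
      w = Sum.inl () ∨ (∃ i ∉ B, w = Sum.inr (Sum.inl i)) ∨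
        ∃ j, ((ends j).1 ∉ B ∨ (ends j).2 ∉ B) ∧ w = Sum.inr (Sum.inr j) := by
  rcases w with ⟨⟨⟩⟩ | i | j <;> simp [dksCut, dksCovered]
  tauto

lemma notMem_dksCut_of_adj {a b : DksV N M} (hab : dksAdj ends a b) (ha : a ∉ dksBlocked B)
    (hb : b ∉ dksBlocked B) : b ∉ dksCut ends B := by
  rw [notMem_dksCut_iff]
  rcases a with ⟨⟩ | i | j <;> rcases b with ⟨⟩ | i' | j' <;> simp_all [dksAdj]
  rcases hab with rfl | rfl <;> simp_all

lemma reflTransGen_iff_notMem_dksCut (w : DksV N M) :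
    Relation.ReflTransGen (fun a b => dksAdj ends a b ∧ a ∉ dksBlocked B ∧ b ∉ dksBlocked B)
      (Sum.inl ()) w ↔ w ∉ dksCut ends B := by
  constructor
  · intro h
    rcases Relation.ReflTransGen.cases_tail_iff _ _ _ |>.1 h with rfl | ⟨a, -, hab, ha, hb⟩
    · simp [notMem_dksCut_iff]
    · exact notMem_dksCut_of_adj ends B hab ha hb
  · have hC : ∀ i ∉ B, Relation.ReflTransGen
        (fun a b => dksAdj ends a b ∧ a ∉ dksBlocked B ∧ b ∉ dksBlocked B)
        (Sum.inl ()) (Sum.inr (Sum.inl i)) := fun i hi =>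
      .single ⟨trivial, by simp, by simpa⟩
    rw [notMem_dksCut_iff]
    rintro (rfl | ⟨i, hi, rfl⟩ | ⟨j, hj | hj, rfl⟩)
    · exact .refl
    · exact hC i hi
    · exact (hC _ hj).tail ⟨Or.inl rfl, by simpa, by simp⟩
    · exact (hC _ hj).tail ⟨Or.inr rfl, by simpa, by simp⟩

lemma card_dksCut : (dksCut ends B).card = B.card + (dksCovered ends B).card := by
  have hdisj : Disjoint (dksBlocked B)
      ((dksCovered ends B).image fun j => (Sum.inr (Sum.inr j) : DksV N M)) := by
    simp [disjoint_left]
  rw [dksCut, card_union_of_disjoint hdisj, dksBlocked,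
    card_image_of_injective _ fun _ _ h => by simpa using h,
    card_image_of_injective _ fun _ _ h => by simpa using h]

lemma dksSpread_add_card_dksCut :
    dksSpread ends (dksBlocked B) + (dksCut ends B).card = Fintype.card (DksV N M) := by
  have hreach : (univ.filter fun w => Relation.ReflTransGen
      (fun a b => dksAdj ends a b ∧ a ∉ dksBlocked B ∧ b ∉ dksBlocked B) (Sum.inl ()) w) =
      (dksCut ends B)ᶜ := by
    ext w
    simp [reflTransGen_iff_notMem_dksCut]
  rw [dksSpread, hreach, card_compl, Nat.sub_add_cancel (card_le_univ _)]

end Blocking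

theorem dks_blocking_decrease_general {N M : ℕ} (ends : Fin M → Fin N × Fin N)
    (k : ℕ) (B : Finset (Fin N)) (hk : B.card = k) :
    dksSpread ends ∅ =
      dksSpread ends (B.image fun i => (Sum.inr (Sum.inl i) : DksV N M)) +
        k + (Finset.univ.filter fun j : Fin M =>
              (ends j).1 ∈ B ∧ (ends j).2 ∈ B).card := by
  have hB := dksSpread_add_card_dksCut ends B
  have h0 := dksSpread_add_card_dksCut ends (∅ : Finset (Fin N))
  rw [card_dksCut] at hB h0
  simp only [dksBlocked, dksCovered, image_empty, card_empty, notMem_empty, false_and,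
    filter_false, add_zero] at hB h0
  omega

/-- blocking a set `B ⊆ C` of size `k` in the reduction graph
decreases the number of vertices reachable from the seed by exactly
`|B| + g`, where `g` is the number of `D`-vertices both of whose in-neighbors
in `C` are blocked. -/
theorem dks_blocking_decrease {N M : ℕ} (ends : Fin M → Fin N × Fin N)
    (hends : ∀ j, (ends j).1 ≠ (ends j).2)
    (k : ℕ) (B : Finset (Fin N)) (hk : B.card = k) :
    dksSpread ends ∅ =
      dksSpread ends (B.image fun i => (Sum.inr (Sum.inl i) : DksV N M)) +
        k + (Finset.univ.filter fun j : Fin M =>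
              (ends j).1 ∈ B ∧ (ends j).2 ∈ B).card :=
  dks_blocking_decrease_general ends k B hk
end
end

section
/- In the DKS reduction graph, for any budget k, there exists an optimal blocker set for the influence minimization problem that is entirely contained in C (i.e., blocks no vertex of D): for any blocker set B of size at most k, there is a blocker set B' ⊆ C with |B'| ≤ |B| achieving spread at most that of B. -/
/-!
The reduction graph from Densest-k-Subgraph to Influence Minimization.
The undirected graph `H` has `N` vertices and `M` edges, given by an
endpoint map `ends : Fin M → Fin N × Fin N`.  The reduction graph `G'` has
a seed vertex `Sum.inl ()`, a layer `C` of vertices `Sum.inr (Sum.inl i)`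
(one per vertex of `H`) and a layer `D` of vertices `Sum.inr (Sum.inr j)`
(one per edge of `H`); the seed points to every vertex of `C`, and each
`c` points to the `D`-vertices of the edges it is an endpoint of.  All
propagation probabilities are `1`, so the spread equals the number of
vertices reachable from the seed after removing the blocked vertices.
-/

open Finset

noncomputable section
open scoped Classical

/-!
Every vertex of `D` is a sink, so unblocking `d_j` can make reachable only `d_j` itself.
Hence a blocked `d_j` can be traded for an unblocked `c_i`, which was reached (the seed points
to it) and no longer is, without increasing the spread; if all of `C` is blocked, `d_j` is
unreachable anyway and can simply be unblocked. Repeating this empties the blocked part of `D`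
without increasing the number of blockers.
-/

section

variable {N M : ℕ} (ends : Fin M → Fin N × Fin N)

def dksReached (B : Finset (DksV N M)) : DksV N M → Prop
  | Sum.inl _ => True
  | Sum.inr (Sum.inl i) => Sum.inr (Sum.inl i) ∉ B
  | Sum.inr (Sum.inr j) => Sum.inr (Sum.inr j) ∉ B ∧
      ((Sum.inr (Sum.inl (ends j).1) : DksV N M) ∉ B ∨
        (Sum.inr (Sum.inl (ends j).2) : DksV N M) ∉ B)

def dksDPart (B : Finset (DksV N M)) : Finset (DksV N M) :=
  B.filter fun x => ∃ j, x = Sum.inr (Sum.inr j)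

variable {ends} {B : Finset (DksV N M)}

theorem reflTransGen_iff_dksReached
    (hseed : (Sum.inl () : DksV N M) ∉ B) (w : DksV N M) :
    Relation.ReflTransGen (fun a b => dksAdj ends a b ∧ a ∉ B ∧ b ∉ B) (Sum.inl ()) w ↔
      dksReached ends B w := by
  constructor
  · intro h
    induction h with
    | refl => trivial
    | @tail a b _ hab _ =>
      obtain ⟨hadj, ha, hb⟩ := hab
      match a, b with
      | Sum.inl _, Sum.inr (Sum.inl _) => exact hb
      | Sum.inr (Sum.inl _), Sum.inr (Sum.inr _) =>
        rcases hadj with rfl | rfl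
        exacts [⟨hb, Or.inl ha⟩, ⟨hb, Or.inr ha⟩]
  · intro h
    have seed_step : ∀ i, (Sum.inr (Sum.inl i) : DksV N M) ∉ B →
        Relation.ReflTransGen (fun a b => dksAdj ends a b ∧ a ∉ B ∧ b ∉ B)
          (Sum.inl ()) (Sum.inr (Sum.inl i)) :=
      fun i hi => .single ⟨trivial, hseed, hi⟩
    match w, h with
    | Sum.inl (), _ => exact .refl
    | Sum.inr (Sum.inl i), hi => exact seed_step i hi
    | Sum.inr (Sum.inr j), ⟨hj, he⟩ =>
      rcases he with he | he
      exacts [.tail (seed_step _ he) ⟨Or.inl rfl, he, hj⟩,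
        .tail (seed_step _ he) ⟨Or.inr rfl, he, hj⟩]

theorem dksSpread_eq_card_filter (hseed : (Sum.inl () : DksV N M) ∉ B) :
    dksSpread ends B = #(univ.filter (dksReached ends B)) := by
  unfold dksSpread
  rw [filter_congr fun w _ => reflTransGen_iff_dksReached hseed w]

theorem dksReached.of_superset {B' : Finset (DksV N M)} (h : B ⊆ B') {w : DksV N M}
    (hw : dksReached ends B' w) : dksReached ends B w := by
  match w, hw with
  | Sum.inl _, _ => trivial
  | Sum.inr (Sum.inl _), hi => exact fun hB => hi (h hB)
  | Sum.inr (Sum.inr _), ⟨hj, he⟩ =>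
    exact ⟨fun hB => hj (h hB), he.imp (fun h1 hB => h1 (h hB)) (fun h2 hB => h2 (h hB))⟩

theorem dksReached.of_erase {j : Fin M} {w : DksV N M}
    (hwj : w ≠ Sum.inr (Sum.inr j)) (hw : dksReached ends (B.erase (Sum.inr (Sum.inr j))) w) :
    dksReached ends B w := by
  match w, hw with
  | Sum.inl _, _ => trivial
  | Sum.inr (Sum.inl _), hi => simp_all [dksReached]
  | Sum.inr (Sum.inr _), hl => simp_all [dksReached]

theorem dksSpread_erase_le (hseed : (Sum.inl () : DksV N M) ∉ B) {j : Fin M}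
    (h₁ : (Sum.inr (Sum.inl (ends j).1) : DksV N M) ∈ B)
    (h₂ : (Sum.inr (Sum.inl (ends j).2) : DksV N M) ∈ B) :
    dksSpread ends (B.erase (Sum.inr (Sum.inr j))) ≤ dksSpread ends B := by
  rw [dksSpread_eq_card_filter hseed,
    dksSpread_eq_card_filter fun h => hseed (mem_of_mem_erase h)]
  refine card_le_card fun w hw => ?_
  simp only [mem_filter, mem_univ, true_and] at hw ⊢
  refine hw.of_erase ?_
  rintro rfl
  obtain ⟨-, he⟩ := hw
  exact he.elim (· (mem_erase_of_ne_of_mem (by simp) h₁))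
    (· (mem_erase_of_ne_of_mem (by simp) h₂))

theorem dksSpread_insert_erase_le (hseed : (Sum.inl () : DksV N M) ∉ B) {i : Fin N} {j : Fin M}
    (hd : (Sum.inr (Sum.inr j) : DksV N M) ∈ B) (hc : (Sum.inr (Sum.inl i) : DksV N M) ∉ B) :
    dksSpread ends (insert (Sum.inr (Sum.inl i)) (B.erase (Sum.inr (Sum.inr j)))) ≤
      dksSpread ends B := by
  set c : DksV N M := Sum.inr (Sum.inl i)
  set d : DksV N M := Sum.inr (Sum.inr j)
  set R := univ.filter (dksReached ends B)
  have hcR : c ∈ R := mem_filter.2 ⟨mem_univ _, hc⟩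
  have hdR : d ∉ R := fun h => (mem_filter.1 h).2.1 hd
  have hsub : univ.filter (dksReached ends (insert c (B.erase d))) ⊆ (insert d R).erase c := by
    intro w hw
    simp only [mem_filter, mem_univ, true_and] at hw
    have hwc : w ≠ c := by
      rintro rfl
      exact hw (mem_insert_self _ _)
    refine mem_erase.2 ⟨hwc, ?_⟩
    by_cases hwd : w = d
    · exact hwd ▸ mem_insert_self _ _
    · exact mem_insert_of_mem
        (mem_filter.2 ⟨mem_univ _, (hw.of_superset (subset_insert _ _)).of_erase hwd⟩)
  calc dksSpread ends (insert c (B.erase d))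
      = #(univ.filter (dksReached ends (insert c (B.erase d)))) :=
        dksSpread_eq_card_filter (by simp [c, hseed])
    _ ≤ #((insert d R).erase c) := card_le_card hsub
    _ = #R := by rw [card_erase_of_mem (mem_insert_of_mem hcR), card_insert_of_notMem hdR]; rfl
    _ = dksSpread ends B := (dksSpread_eq_card_filter hseed).symm

theorem exists_dksSpread_le_dksDPart_erase (hseed : (Sum.inl () : DksV N M) ∉ B) {j : Fin M}
    (hd : (Sum.inr (Sum.inr j) : DksV N M) ∈ B) :
    ∃ B' : Finset (DksV N M), (Sum.inl () : DksV N M) ∉ B' ∧ #B' ≤ #B ∧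
      dksSpread ends B' ≤ dksSpread ends B ∧
      dksDPart B' = (dksDPart B).erase (Sum.inr (Sum.inr j)) := by
  unfold dksDPart
  by_cases hC : ∃ i : Fin N, (Sum.inr (Sum.inl i) : DksV N M) ∉ B
  · obtain ⟨i, hi⟩ := hC
    refine ⟨insert (Sum.inr (Sum.inl i)) (B.erase (Sum.inr (Sum.inr j))), by simp [hseed],
      (card_insert_le _ _).trans (card_erase_add_one hd).le,
      dksSpread_insert_erase_le hseed hd hi, ?_⟩
    rw [filter_insert, if_neg (by simp), filter_erase]
  · push Not at hC
    exact ⟨B.erase (Sum.inr (Sum.inr j)), fun h => hseed (mem_of_mem_erase h), card_erase_le,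
      dksSpread_erase_le hseed (hC _) (hC _), filter_erase _ _ _⟩

end

theorem dks_optimal_blockers_in_C_general {N M : ℕ} (ends : Fin M → Fin N × Fin N)
    (B : Finset (DksV N M))
    (hseed : (Sum.inl () : DksV N M) ∉ B) :
    ∃ B' : Finset (DksV N M),
      (∀ x ∈ B', ∃ i : Fin N, x = Sum.inr (Sum.inl i)) ∧
      B'.card ≤ B.card ∧
      dksSpread ends B' ≤ dksSpread ends B := by
  induction hn : #(dksDPart B) generalizing B with
  | zero =>
    refine ⟨B, fun x hx => ?_, le_rfl, le_rfl⟩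
    rcases x with _ | i | j
    · exact absurd hx hseed
    · exact ⟨i, rfl⟩
    · exact absurd (card_eq_zero.1 hn) (ne_empty_of_mem (mem_filter.2 ⟨hx, j, rfl⟩))
  | succ n ih =>
    obtain ⟨x, hx⟩ := card_pos.1 (by rw [hn]; exact n.succ_pos)
    obtain ⟨hxB, j, rfl⟩ := mem_filter.1 hx
    obtain ⟨B₁, hseed₁, hcard₁, hspread₁, hfilter₁⟩ :=
      exists_dksSpread_le_dksDPart_erase (ends := ends) hseed hxB
    obtain ⟨B', hC, hcard', hspread'⟩ :=
      ih B₁ hseed₁ (by rw [hfilter₁, card_erase_of_mem hx, hn, Nat.add_sub_cancel])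
    exact ⟨B', hC, hcard'.trans hcard₁, hspread'.trans hspread₁⟩

/-- in the reduction graph there is always an optimal blocker
set contained in the layer `C`: for any budget `k` and any blocker set `B`
(not containing the seed) of size at most `k`, there is a blocker set
`B' ⊆ C` with `|B'| ≤ |B|` whose spread is at most that of `B`. -/
theorem dks_optimal_blockers_in_C {N M : ℕ} (ends : Fin M → Fin N × Fin N)
    (hends : ∀ j, (ends j).1 ≠ (ends j).2)
    (k : ℕ) (B : Finset (DksV N M))
    (hseed : (Sum.inl () : DksV N M) ∉ B) (hk : B.card ≤ k) :
    ∃ B' : Finset (DksV N M),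
      (∀ x ∈ B', ∃ i : Fin N, x = Sum.inr (Sum.inl i)) ∧
      B'.card ≤ B.card ∧
      dksSpread ends B' ≤ dksSpread ends B :=
  dks_optimal_blockers_in_C_general ends B hseed
end
end
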